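/- (Absolute-value versions of the complexity bounds.) Let m ≥ 1, k ≥ 0, let G₀, G₁, …, G_k be nonempty bounded subsets of ℝ^m with G₀ ⊆ G_k, and let γ ≥ 0 satisfy G_{j+1} ⊆ (1+γ)·conv(G_j) + (−γ)·conv(G_j) for every 0 ≤ j < k (Minkowski sum). Suppose moreover that γ' ≥ 0 satisfies G_k ⊆ (1+γ')·conv(G₀) + (−γ')·conv(G₀), and set γ* := min{(1+2γ)^k, 1+2γ'}. Then R̄(G₀) ≤ R̄(G_k) ≤ γ*·R̄(G₀) and Ḡ(G₀) ≤ Ḡ(G_k) ≤ γ*·Ḡ(G₀). -/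

import Mathlib

/-!
For a fixed weight vector `w`, the map `v ↦ |(1/m) ⟨w, v⟩|` is convex, so its supremum over
`conv A` is its supremum over `A`. Hence a set contained in `(1 + γ) conv B - γ conv B` has
supremum at most `(1 + 2γ)` times that of `B`; iterating along the chain, or applying this once to
the inclusion of `G k` in the dilated hull of `G 0`, bounds the supremum over `G k` pointwise in
`w`, and monotonicity in the set gives the lower bound. Averaging over signs, or integrating
against the Gaussian measure, transfers both bounds to `R̄` and `Ḡ`: the supremum is Lipschitz
in `w` and at most a multiple of `‖w‖`, hence integrable.
-/

open Finset MeasureTheory ProbabilityTheory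
open scoped Pointwise

/-- Absolute-value empirical Rademacher complexity:
`R̄(A) = 2^{-m} · Σ_{ε ∈ {-1,1}^m} sup_{v ∈ A} |(1/m) Σ_i ε_i v_i|`. -/
noncomputable def radCompAbs (m : ℕ) (A : Set (Fin m → ℝ)) : ℝ :=
  ((2 : ℝ) ^ m)⁻¹ * ∑ ε : Fin m → Bool,
    sSup ((fun v => |(1 / (m : ℝ)) * ∑ i, (if ε i then (1 : ℝ) else -1) * v i|) '' A)

/-- Absolute-value empirical Gaussian complexity:
`Ḡ(A) = E_{g ∼ N(0,1)^m}[sup_{v ∈ A} |(1/m) Σ_i g_i v_i|]`. -/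
noncomputable def gaussCompAbs (m : ℕ) (A : Set (Fin m → ℝ)) : ℝ :=
  ∫ g, sSup ((fun v => |(1 / (m : ℝ)) * ∑ i, g i * v i|) '' A)
    ∂(Measure.pi fun _ : Fin m => gaussianReal 0 1)

section SupAbs

variable {E : Type*} [AddCommGroup E] [Module ℝ E]

noncomputable def supAbs (f : E →ₗ[ℝ] ℝ) (A : Set E) : ℝ :=
  sSup ((fun v => |f v|) '' A)

variable (f : E →ₗ[ℝ] ℝ) {A B : Set E}

theorem supAbs_nonneg (A : Set E) : 0 ≤ supAbs f A :=
  Real.sSup_nonneg <| by rintro _ ⟨v, -, rfl⟩; exact abs_nonneg _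

theorem supAbs_le {c : ℝ} (h : ∀ v ∈ A, |f v| ≤ c) (hc : 0 ≤ c) : supAbs f A ≤ c :=
  Real.sSup_le (by rintro _ ⟨v, hv, rfl⟩; exact h v hv) hc

theorem abs_le_supAbs (hA : BddAbove ((fun v => |f v|) '' A)) {v : E} (hv : v ∈ A) :
    |f v| ≤ supAbs f A :=
  le_csSup hA ⟨v, hv, rfl⟩

theorem supAbs_mono (hB : BddAbove ((fun v => |f v|) '' B)) (h : A ⊆ B) :
    supAbs f A ≤ supAbs f B :=
  supAbs_le f (fun _ hv => abs_le_supAbs f hB (h hv)) (supAbs_nonneg f B)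

theorem abs_le_supAbs_of_mem_convexHull (hA : BddAbove ((fun v => |f v|) '' A)) {v : E}
    (hv : v ∈ convexHull ℝ A) : |f v| ≤ supAbs f A :=
  abs_le.mpr <| convexHull_min (t := f ⁻¹' Set.Icc (-supAbs f A) (supAbs f A))
    (fun _ hw => abs_le.mp (abs_le_supAbs f hA hw)) ((convex_Icc _ _).linear_preimage f) hv

theorem supAbs_le_of_subset_convexHull_smul_sub {c : ℝ} (hc : 0 ≤ c)
    (hB : BddAbove ((fun v => |f v|) '' B))
    (h : A ⊆ (1 + c) • convexHull ℝ B + (-c) • convexHull ℝ B) :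
    supAbs f A ≤ (1 + 2 * c) * supAbs f B := by
  refine supAbs_le f ?_ (by have := supAbs_nonneg f B; positivity)
  intro _ hv
  obtain ⟨_, ⟨x, hx, rfl⟩, _, ⟨y, hy, rfl⟩, rfl⟩ := h hv
  have hx' := abs_le_supAbs_of_mem_convexHull f hB hx
  have hy' := abs_le_supAbs_of_mem_convexHull f hB hy
  calc |f ((1 + c) • x + (-c) • y)| = |(1 + c) * f x - c * f y| := by simp [sub_eq_add_neg]
    _ ≤ (1 + c) * |f x| + c * |f y| := by
      refine (abs_sub _ _).trans ?_
      rw [abs_mul, abs_mul, abs_of_nonneg hc, abs_of_nonneg (by linarith)]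
    _ ≤ (1 + c) * supAbs f B + c * supAbs f B :=
        add_le_add (mul_le_mul_of_nonneg_left hx' (by linarith)) (mul_le_mul_of_nonneg_left hy' hc)
    _ = (1 + 2 * c) * supAbs f B := by ring

theorem supAbs_le_pow_mul_of_chain {G : ℕ → Set E} {c : ℝ} (hc : 0 ≤ c) {k : ℕ}
    (hbdd : ∀ j < k, BddAbove ((fun v => |f v|) '' G j))
    (hstep : ∀ j < k, G (j + 1) ⊆ (1 + c) • convexHull ℝ (G j) + (-c) • convexHull ℝ (G j)) :
    supAbs f (G k) ≤ (1 + 2 * c) ^ k * supAbs f (G 0) := by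
  induction k with
  | zero => simp
  | succ k ih =>
    calc supAbs f (G (k + 1)) ≤ (1 + 2 * c) * supAbs f (G k) :=
          supAbs_le_of_subset_convexHull_smul_sub f hc (hbdd k k.lt_succ_self)
            (hstep k k.lt_succ_self)
      _ ≤ (1 + 2 * c) * ((1 + 2 * c) ^ k * supAbs f (G 0)) :=
          mul_le_mul_of_nonneg_left
            (ih (fun j hj => hbdd j (by omega)) (fun j hj => hstep j (by omega))) (by linarith)
      _ = (1 + 2 * c) ^ (k + 1) * supAbs f (G 0) := by ring

theorem supAbs_le_supAbs_add_supAbs_sub (g : E →ₗ[ℝ] ℝ) (hg : BddAbove ((fun v => |g v|) '' A))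
    (hfg : BddAbove ((fun v => |(f - g) v|) '' A)) :
    supAbs f A ≤ supAbs g A + supAbs (f - g) A := by
  refine supAbs_le f (fun v hv => ?_) (add_nonneg (supAbs_nonneg g A) (supAbs_nonneg _ A))
  calc |f v| = |g v + (f - g) v| := by simp
    _ ≤ |g v| + |(f - g) v| := abs_add_le _ _
    _ ≤ supAbs g A + supAbs (f - g) A :=
        add_le_add (abs_le_supAbs g hg hv) (abs_le_supAbs _ hfg hv)

end SupAbs

noncomputable def empiricalCorr (m : ℕ) : (Fin m → ℝ) →ₗ[ℝ] (Fin m → ℝ) →ₗ[ℝ] ℝ :=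
  (1 / (m : ℝ)) • dotProductBilin ℝ ℝ

section EmpiricalCorr

variable {m : ℕ}

theorem empiricalCorr_apply (w v : Fin m → ℝ) :
    empiricalCorr m w v = (1 / (m : ℝ)) * ∑ i, w i * v i :=
  rfl

theorem abs_empiricalCorr_le (w v : Fin m → ℝ) : |empiricalCorr m w v| ≤ ‖w‖ * ‖v‖ := by
  rw [empiricalCorr_apply, abs_mul, abs_of_nonneg (by positivity)]
  calc 1 / (m : ℝ) * |∑ i, w i * v i| ≤ 1 / (m : ℝ) * ∑ _i : Fin m, ‖w‖ * ‖v‖ := by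
        gcongr
        refine (Finset.abs_sum_le_sum_abs _ _).trans (Finset.sum_le_sum fun i _ => ?_)
        rw [abs_mul]
        exact mul_le_mul (norm_le_pi_norm w i) (norm_le_pi_norm v i) (abs_nonneg _)
          (norm_nonneg _)
    _ = (1 / (m : ℝ) * m) * (‖w‖ * ‖v‖) := by simp [mul_assoc]
    _ ≤ ‖w‖ * ‖v‖ := by
        refine mul_le_of_le_one_left (by positivity) ?_
        rcases Nat.eq_zero_or_pos m with rfl | hm
        · simp
        · rw [one_div_mul_cancel (by positivity)]

variable {A : Set (Fin m → ℝ)} {R : ℝ}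

theorem bddAbove_abs_empiricalCorr_image (hR : ∀ v ∈ A, ‖v‖ ≤ R) (w : Fin m → ℝ) :
    BddAbove ((fun v => |empiricalCorr m w v|) '' A) :=
  ⟨‖w‖ * R, by
    rintro _ ⟨v, hv, rfl⟩
    exact (abs_empiricalCorr_le w v).trans (by gcongr; exact hR v hv)⟩

theorem supAbs_empiricalCorr_le (hR : ∀ v ∈ A, ‖v‖ ≤ R) (hR0 : 0 ≤ R) (w : Fin m → ℝ) :
    supAbs (empiricalCorr m w) A ≤ ‖w‖ * R :=
  supAbs_le _ (fun v hv => (abs_empiricalCorr_le w v).trans (by gcongr; exact hR v hv))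
    (by positivity)

theorem lipschitzWith_supAbs_empiricalCorr (hR : ∀ v ∈ A, ‖v‖ ≤ R) (hR0 : 0 ≤ R) :
    LipschitzWith R.toNNReal fun w => supAbs (empiricalCorr m w) A := by
  refine LipschitzWith.of_le_add_mul' R fun w w' => ?_
  calc supAbs (empiricalCorr m w) A
      ≤ supAbs (empiricalCorr m w') A + supAbs (empiricalCorr m w - empiricalCorr m w') A :=
        supAbs_le_supAbs_add_supAbs_sub _ _ (bddAbove_abs_empiricalCorr_image hR w')
          (by simpa only [← map_sub] using bddAbove_abs_empiricalCorr_image hR (w - w'))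
    _ ≤ supAbs (empiricalCorr m w') A + R * dist w w' := by
        rw [← map_sub, dist_eq_norm, mul_comm]
        gcongr
        exact supAbs_empiricalCorr_le hR hR0 _

end EmpiricalCorr

theorem integrable_id_pi_of_isGaussian {ι : Type*} [Fintype ι] (ν : ι → Measure ℝ)
    [∀ i, IsGaussian (ν i)] : Integrable id (Measure.pi ν) :=
  Integrable.of_eval fun i => (measurePreserving_eval _ i).integrable_comp_of_integrable
    IsGaussian.integrable_id

section Complexity

variable {m : ℕ} {A B : Set (Fin m → ℝ)} {c : ℝ}

theorem radCompAbs_le_mul_of_forall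
    (h : ∀ w, supAbs (empiricalCorr m w) A ≤ c * supAbs (empiricalCorr m w) B) :
    radCompAbs m A ≤ c * radCompAbs m B := by
  change _ * ∑ ε : Fin m → Bool, supAbs (empiricalCorr m fun i => if ε i then 1 else -1) A
    ≤ c * (_ * ∑ ε : Fin m → Bool, supAbs (empiricalCorr m fun i => if ε i then 1 else -1) B)
  rw [mul_left_comm c, Finset.mul_sum _ _ c]
  exact mul_le_mul_of_nonneg_left (Finset.sum_le_sum fun ε _ => h _) (by positivity)

theorem integrable_supAbs_empiricalCorr (hA : Bornology.IsBounded A) :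
    Integrable (fun g => supAbs (empiricalCorr m g) A)
      (Measure.pi fun _ : Fin m => gaussianReal 0 1) := by
  obtain ⟨R, hR0, hAR⟩ := hA.subset_closedBall_lt 0 0
  have hR : ∀ v ∈ A, ‖v‖ ≤ R := fun v hv => mem_closedBall_zero_iff.mp (hAR hv)
  refine ((integrable_id_pi_of_isGaussian _).norm.mul_const R).mono'
    (lipschitzWith_supAbs_empiricalCorr hR hR0.le).continuous.aestronglyMeasurable
    (.of_forall fun g => ?_)
  rw [Real.norm_of_nonneg (supAbs_nonneg _ A)]
  exact supAbs_empiricalCorr_le hR hR0.le g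

theorem gaussCompAbs_le_mul_of_forall (hB : Bornology.IsBounded B)
    (h : ∀ w, supAbs (empiricalCorr m w) A ≤ c * supAbs (empiricalCorr m w) B) :
    gaussCompAbs m A ≤ c * gaussCompAbs m B := by
  change ∫ g, supAbs (empiricalCorr m g) A ∂_ ≤ c * ∫ g, supAbs (empiricalCorr m g) B ∂_
  rw [← integral_const_mul]
  exact integral_mono_of_nonneg (.of_forall fun g => supAbs_nonneg _ A)
    ((integrable_supAbs_empiricalCorr hB).const_mul c) (.of_forall h)

end Complexity

theorem stmt19_general (m : ℕ) (k : ℕ) (G : ℕ → Set (Fin m → ℝ))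
    (hbd : ∀ j ≤ k, Bornology.IsBounded (G j))
    (hsub : G 0 ⊆ G k) (γ : ℝ) (hγ : 0 ≤ γ)
    (hstep : ∀ j < k,
      G (j + 1) ⊆ (1 + γ) • convexHull ℝ (G j) + (-γ) • convexHull ℝ (G j))
    (γ' : ℝ) (hγ' : 0 ≤ γ')
    (hmax : G k ⊆ (1 + γ') • convexHull ℝ (G 0) + (-γ') • convexHull ℝ (G 0))
    (γs : ℝ) (hγs : γs = min ((1 + 2 * γ) ^ k) (1 + 2 * γ')) :
    (radCompAbs m (G 0) ≤ radCompAbs m (G k) ∧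
        radCompAbs m (G k) ≤ γs * radCompAbs m (G 0)) ∧
      gaussCompAbs m (G 0) ≤ gaussCompAbs m (G k) ∧
        gaussCompAbs m (G k) ≤ γs * gaussCompAbs m (G 0) := by
  have hbdd : ∀ j ≤ k, ∀ w, BddAbove ((fun v => |empiricalCorr m w v|) '' G j) := fun j hj w => by
    obtain ⟨R, -, hR⟩ := (hbd j hj).subset_closedBall_lt 0 0
    exact bddAbove_abs_empiricalCorr_image (fun v hv => mem_closedBall_zero_iff.mp (hR hv)) w
  have hlower : ∀ w, supAbs (empiricalCorr m w) (G 0) ≤ 1 * supAbs (empiricalCorr m w) (G k) :=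
    fun w => (supAbs_mono _ (hbdd k le_rfl w) hsub).trans_eq (one_mul _).symm
  have hupper : ∀ w, supAbs (empiricalCorr m w) (G k) ≤ γs * supAbs (empiricalCorr m w) (G 0) := by
    intro w
    rw [hγs, min_mul_of_nonneg _ _ (supAbs_nonneg _ _)]
    exact le_min
      (supAbs_le_pow_mul_of_chain _ hγ (fun j hj => hbdd j hj.le w) hstep)
      (supAbs_le_of_subset_convexHull_smul_sub _ hγ' (hbdd 0 k.zero_le w) hmax)
  refine ⟨⟨?_, radCompAbs_le_mul_of_forall hupper⟩, ?_,
    gaussCompAbs_le_mul_of_forall (hbd 0 k.zero_le) hupper⟩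
  · simpa using radCompAbs_le_mul_of_forall hlower
  · simpa using gaussCompAbs_le_mul_of_forall (hbd k le_rfl) hlower

theorem stmt19 (m : ℕ) (hm : 1 ≤ m) (k : ℕ) (G : ℕ → Set (Fin m → ℝ))
    (hne : ∀ j ≤ k, (G j).Nonempty) (hbd : ∀ j ≤ k, Bornology.IsBounded (G j))
    (hsub : G 0 ⊆ G k) (γ : ℝ) (hγ : 0 ≤ γ)
    (hstep : ∀ j < k,
      G (j + 1) ⊆ (1 + γ) • convexHull ℝ (G j) + (-γ) • convexHull ℝ (G j))
    (γ' : ℝ) (hγ' : 0 ≤ γ')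
    (hmax : G k ⊆ (1 + γ') • convexHull ℝ (G 0) + (-γ') • convexHull ℝ (G 0))
    (γs : ℝ) (hγs : γs = min ((1 + 2 * γ) ^ k) (1 + 2 * γ')) :
    (radCompAbs m (G 0) ≤ radCompAbs m (G k) ∧
        radCompAbs m (G k) ≤ γs * radCompAbs m (G 0)) ∧
      gaussCompAbs m (G 0) ≤ gaussCompAbs m (G k) ∧
        gaussCompAbs m (G k) ≤ γs * gaussCompAbs m (G 0) :=
  stmt19_general m k G hbd hsub γ hγ hstep γ' hγ' hmax γs hγs
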